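/- In the one-period market with prices y ∈ L^0(ℝ^d, H) and Y ∈ L^0(ℝ^d, F), suppose g : Ω × ℝ^d → ℝ is an H-normal integrand. Then for every θ ∈ L^0(ℝ^d, H), almost surely esssup_H( g(Y) − θ·Y ) = sup_{z ∈ supp_H Y} ( g(z) − θ·z ) = f*(−θ), where f(ω, z) := −g(ω, z) + δ_{supp_H Y(ω)}(z) (with δ_C(z) = 0 if z ∈ C and +∞ otherwise) and f*(ω, x) := sup_{z ∈ ℝ^d} ( x·z − f(ω, z) ) is its Fenchel–Legendre conjugate. -/

import Mathlib

open MeasureTheory Set Filter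
open scoped Classical

noncomputable section

/-- Scalar product on `ℝ^d`. -/
def dotp {d : ℕ} (a b : Fin d → ℝ) : ℝ := ∑ i, a i * b i

/-- `κ` is a regular version of the conditional law of `X` knowing the σ-algebra `H`. -/
structure CondLaw {Ω : Type*} (H : MeasurableSpace Ω) {mΩ : MeasurableSpace Ω}
    (μ : Measure Ω) {E : Type*} [MeasurableSpace E] (X : Ω → E) (κ : Ω → Measure E) :
    Prop where
  isProb : ∀ ω, IsProbabilityMeasure (κ ω)
  meas : ∀ A : Set E, MeasurableSet A → Measurable[H] fun ω => κ ω A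
  law : ∀ A : Set E, MeasurableSet A → ∀ B : Set Ω, MeasurableSet[H] B →
    ∫⁻ ω in B, κ ω A ∂μ = μ (B ∩ X ⁻¹' A)

/-- The support of the measure `κ ω`: the intersection of all closed sets of full
measure (for a regular conditional law this is the conditional support). -/
def condSupp {Ω E : Type*} [TopologicalSpace E] [MeasurableSpace E]
    (κ : Ω → Measure E) (ω : Ω) : Set E :=
  ⋂₀ {A : Set E | IsClosed A ∧ κ ω A = 1}

/-- `γ` is (a version of) the conditional essential supremum of `X` knowing `H`. -/
def IsCondEssSup {Ω : Type*} (H : MeasurableSpace Ω) {mΩ : MeasurableSpace Ω}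
    (μ : Measure Ω) (X : Ω → ℝ) (γ : Ω → EReal) : Prop :=
  Measurable[H] γ ∧ (∀ᵐ ω ∂μ, (X ω : EReal) ≤ γ ω) ∧
    ∀ ζ : Ω → EReal, Measurable[H] ζ → (∀ᵐ ω ∂μ, (X ω : EReal) ≤ ζ ω) →
      ∀ᵐ ω ∂μ, γ ω ≤ ζ ω

/-- `γ` is (a version of) the conditional essential infimum of `X` knowing `H`. -/
def IsCondEssInf {Ω : Type*} (H : MeasurableSpace Ω) {mΩ : MeasurableSpace Ω}
    (μ : Measure Ω) (X : Ω → ℝ) (γ : Ω → EReal) : Prop :=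
  Measurable[H] γ ∧ (∀ᵐ ω ∂μ, γ ω ≤ (X ω : EReal)) ∧
    ∀ ζ : Ω → EReal, Measurable[H] ζ → (∀ᵐ ω ∂μ, ζ ω ≤ (X ω : EReal)) →
      ∀ᵐ ω ∂μ, ζ ω ≤ γ ω

/-- `p` is (a version of) the essential infimum of the family `S` of random variables. -/
def IsEssInfSet {Ω : Type*} {mΩ : MeasurableSpace Ω} (μ : Measure Ω)
    (S : Set (Ω → ℝ)) (p : Ω → EReal) : Prop :=
  Measurable[mΩ] p ∧ (∀ f ∈ S, ∀ᵐ ω ∂μ, p ω ≤ (f ω : EReal)) ∧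
    ∀ ζ : Ω → EReal, Measurable[mΩ] ζ → (∀ f ∈ S, ∀ᵐ ω ∂μ, ζ ω ≤ (f ω : EReal)) →
      ∀ᵐ ω ∂μ, ζ ω ≤ p ω

/-- The set of super-hedging prices of the claim `Z` in the one-period market `(y, Y)`. -/
def Prices {Ω : Type*} (H : MeasurableSpace Ω) {mΩ : MeasurableSpace Ω} (μ : Measure Ω)
    {d : ℕ} (y Y : Ω → Fin d → ℝ) (Z : Ω → ℝ) : Set (Ω → ℝ) :=
  {x | Measurable[H] x ∧ ∃ θ : Ω → Fin d → ℝ, Measurable[H] θ ∧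
    ∀ᵐ ω ∂μ, Z ω ≤ x ω + dotp (θ ω) fun i => Y ω i - y ω i}

/-- One-dimensional version of `Prices`. -/
def Prices1 {Ω : Type*} (H : MeasurableSpace Ω) {mΩ : MeasurableSpace Ω} (μ : Measure Ω)
    (y Y : Ω → ℝ) (Z : Ω → ℝ) : Set (Ω → ℝ) :=
  {x | Measurable[H] x ∧ ∃ θ : Ω → ℝ, Measurable[H] θ ∧
    ∀ᵐ ω ∂μ, Z ω ≤ x ω + θ ω * (Y ω - y ω)}

/-- One-period super-hedging prices of the zero claim in the market extended by the
additional asset `(pZ, Z)`. -/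
def PricesExt {Ω : Type*} (H : MeasurableSpace Ω) {mΩ : MeasurableSpace Ω} (μ : Measure Ω)
    {d : ℕ} (y Y : Ω → Fin d → ℝ) (Z pZ : Ω → ℝ) : Set (Ω → ℝ) :=
  {x | Measurable[H] x ∧ ∃ α : Ω → ℝ, Measurable[H] α ∧ ∃ θ : Ω → Fin d → ℝ,
    Measurable[H] θ ∧
    ∀ᵐ ω ∂μ, 0 ≤ x ω + α ω * (Z ω - pZ ω) + dotp (θ ω) fun i => Y ω i - y ω i}

/-- The function `f = -g + δ_{D}` of the paper, valued in `EReal`. -/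
def fObj {Ω : Type*} {d : ℕ} (g : Ω → (Fin d → ℝ) → ℝ) (D : Ω → Set (Fin d → ℝ))
    (ω : Ω) (z : Fin d → ℝ) : EReal :=
  if z ∈ D ω then ((-(g ω z) : ℝ) : EReal) else ⊤

/-- Fenchel–Legendre conjugate of an `EReal`-valued function on `ℝ^d`. -/
def eConj {d : ℕ} (f : (Fin d → ℝ) → EReal) (x : Fin d → ℝ) : EReal :=
  ⨆ z : Fin d → ℝ, ((dotp x z : ℝ) : EReal) - f z

/-- Convex-analytic indicator function `δ_s`. -/
def indicatorE {E : Type*} (s : Set E) (x : E) : EReal := if x ∈ s then 0 else ⊤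

/-- Relative concave envelope of `g` with respect to `D`. -/
def concEnv {d : ℕ} (g : (Fin d → ℝ) → ℝ) (D : Set (Fin d → ℝ)) (x : Fin d → ℝ) : EReal :=
  ⨅ v ∈ {v : (Fin d → ℝ) → ℝ | ConcaveOn ℝ univ v ∧ ∀ z ∈ D, g z ≤ v z}, ((v x : ℝ) : EReal)

/-- Upper semicontinuous closure of an `EReal`-valued function. -/
def usClosure {E : Type*} [TopologicalSpace E] (F : E → EReal) (x : E) : EReal :=
  Filter.limsup F (nhds x)

/-- The slope `θ^*` of Corollary 2.19, with the conventions of the paper. -/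
def thetaStar (g : ℝ → ℝ) (M I : ℝ) (S : EReal) : ℝ :=
  if S = (I : EReal) then 0 else if S = ⊤ then M
  else (g S.toReal - g I) / (S.toReal - I)

/-- Multi-period super-hedging prices at time `t` of the claim `g` paid at time `T`. -/
def PricesMulti {Ω : Type*} {mΩ : MeasurableSpace Ω} (𝓕 : ℕ → MeasurableSpace Ω)
    (μ : Measure Ω) {d : ℕ} (S : ℕ → Ω → Fin d → ℝ) (t T : ℕ) (g : Ω → ℝ) :
    Set (Ω → ℝ) :=
  {x | Measurable[𝓕 t] x ∧ ∃ θ : ℕ → Ω → Fin d → ℝ, (∀ u, Measurable[𝓕 u] (θ u)) ∧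
    ∃ ε : Ω → ℝ, Measurable[𝓕 T] ε ∧ (∀ᵐ ω ∂μ, 0 ≤ ε ω) ∧
    ∀ᵐ ω ∂μ, x ω + (∑ u ∈ Finset.Icc (t+1) T,
      dotp (θ (u-1) ω) fun i => S u ω i - S (u-1) ω i) - ε ω = g ω}

/-- One-step super-hedging prices at time `t` of the (extended-real) claim `G`
paid at time `t+1`. -/
def OneStepPrices {Ω : Type*} {mΩ : MeasurableSpace Ω} (𝓕 : ℕ → MeasurableSpace Ω)
    (μ : Measure Ω) {d : ℕ} (S : ℕ → Ω → Fin d → ℝ) (t : ℕ) (G : Ω → EReal) :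
    Set (Ω → ℝ) :=
  {x | Measurable[𝓕 t] x ∧ ∃ θ : Ω → Fin d → ℝ, Measurable[𝓕 t] θ ∧
    ∀ᵐ ω ∂μ, G ω ≤ ((x ω + dotp (θ ω) fun i => S (t+1) ω i - S t ω i : ℝ) : EReal)}

/-- Multi-period super-hedging prices in the market extended by the additional asset `C`. -/
def PricesMultiExt {Ω : Type*} {mΩ : MeasurableSpace Ω} (𝓕 : ℕ → MeasurableSpace Ω)
    (μ : Measure Ω) {d : ℕ} (S : ℕ → Ω → Fin d → ℝ) (C : ℕ → Ω → ℝ) (t T : ℕ)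
    (g : Ω → ℝ) : Set (Ω → ℝ) :=
  {x | Measurable[𝓕 t] x ∧ ∃ θ : ℕ → Ω → Fin d → ℝ, (∀ u, Measurable[𝓕 u] (θ u)) ∧
    ∃ α : ℕ → Ω → ℝ, (∀ u, Measurable[𝓕 u] (α u)) ∧
    ∃ ε : Ω → ℝ, Measurable[𝓕 T] ε ∧ (∀ᵐ ω ∂μ, 0 ≤ ε ω) ∧
    ∀ᵐ ω ∂μ, x ω + (∑ u ∈ Finset.Icc (t+1) T,
      ((dotp (θ (u-1) ω) fun i => S u ω i - S (u-1) ω i) +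
        α (u-1) ω * (C u ω - C (u-1) ω))) - ε ω = g ω}

/-- The set `R_t^T` of claims super-replicable at zero cost, one-dimensional case. -/
def RsetM {Ω : Type*} {mΩ : MeasurableSpace Ω} (𝓕 : ℕ → MeasurableSpace Ω)
    (μ : Measure Ω) (S : ℕ → Ω → ℝ) (t T : ℕ) : Set (Ω → ℝ) :=
  {X | ∃ θ : ℕ → Ω → ℝ, (∀ u, Measurable[𝓕 u] (θ u)) ∧
    ∃ ε : Ω → ℝ, Measurable[𝓕 T] ε ∧ (∀ᵐ ω ∂μ, 0 ≤ ε ω) ∧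
    ∀ᵐ ω ∂μ, X ω = (∑ u ∈ Finset.Icc (t+1) T, θ (u-1) ω * (S u ω - S (u-1) ω)) - ε ω}

/-- Closure with respect to convergence in probability. -/
def closureP {Ω : Type*} {mΩ : MeasurableSpace Ω} (μ : Measure Ω) (A : Set (Ω → ℝ)) :
    Set (Ω → ℝ) :=
  {X | ∃ f : ℕ → Ω → ℝ, (∀ n, f n ∈ A) ∧ TendstoInMeasure μ f Filter.atTop X}

/-! Write `φ ω z = g ω z - θ ω ⬝ z` and `S ω = sup {φ ω z | z ∈ supp κ_ω}`. As `φ ω` is lower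
semicontinuous, `S ω` is the supremum of the rationals `q` with `κ_ω {φ ω > q} > 0`, so `S` is
`H`-measurable; since `Y ω ∈ supp κ_ω`, `S` dominates `φ(·, Y)` and minimality gives `γ ≤ S`.
Conversely, the joint law of `(ω, Y ω)` on `H ⊗ 𝓑(ℝ^d)` is `μ|_H ⊗ κ`, so the `H ⊗ 𝓑`-measurable
set `{γ < φ}`, which `(ω, Y ω)` a.s. avoids, has `κ_ω`-null sections for a.e. `ω`; these sections
are open, hence miss `supp κ_ω`, i.e. `S ≤ γ`. Finally `f*(-θ) = S` because `-θ ⬝ z - f z`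
is `φ ω z` on the support and `⊥` off it. -/

lemma dotp_neg_left {d : ℕ} (a b : Fin d → ℝ) : dotp (-a) b = -dotp a b :=
  neg_dotProduct a b

lemma continuous_dotp_right {d : ℕ} (a : Fin d → ℝ) : Continuous (dotp a) :=
  continuous_const.dotProduct continuous_id

lemma Measurable.dotp {α : Type*} {m : MeasurableSpace α} {d : ℕ} {f g : α → Fin d → ℝ}
    (hf : Measurable f) (hg : Measurable g) : Measurable fun a => _root_.dotp (f a) (g a) :=
  Finset.measurable_sum _ fun _ _ => hf.eval.mul hg.eval

lemma coe_dotp_neg_sub_fObj {Ω : Type*} {d : ℕ} (g : Ω → (Fin d → ℝ) → ℝ)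
    (D : Ω → Set (Fin d → ℝ)) (ω : Ω) (x z : Fin d → ℝ) :
    ((dotp (-x) z : ℝ) : EReal) - fObj g D ω z =
      ⨆ _ : z ∈ D ω, ((g ω z - dotp x z : ℝ) : EReal) := by
  rw [iSup_eq_if, fObj]
  split_ifs
  · rw [← EReal.coe_sub, dotp_neg_left, neg_sub_neg]
  · exact EReal.sub_top _

lemma eConj_fObj_neg {Ω : Type*} {d : ℕ} (g : Ω → (Fin d → ℝ) → ℝ)
    (D : Ω → Set (Fin d → ℝ)) (ω : Ω) (x : Fin d → ℝ) :
    eConj (fObj g D ω) (-x) = sSup ((fun z => ((g ω z - dotp x z : ℝ) : EReal)) '' D ω) := by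
  simp only [eConj, coe_dotp_neg_sub_fObj, sSup_image]

section Support

variable {E : Type*} [TopologicalSpace E] [MeasurableSpace E]

lemma condSupp_eq_support [OpensMeasurableSpace E] {Ω : Type*} (κ : Ω → Measure E) (ω : Ω)
    [IsProbabilityMeasure (κ ω)] : condSupp κ ω = (κ ω).support := by
  rw [Measure.support_eq_sInter, condSupp]
  congr 1
  ext A
  exact and_congr_right fun hA => (prob_compl_eq_zero_iff hA.measurableSet).symm

lemma LowerSemicontinuous.le_of_mem_support {ν : Measure E} {f : E → EReal}
    (hf : LowerSemicontinuous f) {c : EReal} (hc : ν {z | c < f z} = 0) {z : E}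
    (hz : z ∈ ν.support) : f z ≤ c :=
  not_lt.1 fun hlt => Measure.subset_compl_support_of_isOpen (hf.isOpen_preimage c) hc hlt hz

variable [HereditarilyLindelofSpace E]

lemma sSup_image_support_eq_iSup_rat {ν : Measure E} {f : E → ℝ}
    (hf : LowerSemicontinuous f) :
    sSup ((fun z => (f z : EReal)) '' ν.support) =
      ⨆ q : ℚ, if ν {z | (q : ℝ) < f z} = 0 then ⊥ else ((q : ℝ) : EReal) := by
  apply le_antisymm
  · refine sSup_le (forall_mem_image.2 fun z hz => ?_)
    by_contra! hlt
    obtain ⟨q, hq, hqf⟩ := EReal.exists_rat_btwn_of_lt hlt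
    have hpos : ν {z | (q : ℝ) < f z} ≠ 0 :=
      ((Measure.mem_support_iff_forall z).1 hz _
        ((hf.isOpen_preimage q).mem_nhds (EReal.coe_lt_coe_iff.1 hqf))).ne'
    exact hq.not_ge (le_iSup_of_le q (by rw [if_neg hpos]))
  · refine iSup_le fun q => ?_
    split_ifs with h
    · exact bot_le
    · obtain ⟨z, hqz, hz⟩ := Measure.nonempty_inter_support_of_pos (pos_iff_ne_zero.2 h)
      exact le_sSup_of_le (mem_image_of_mem _ hz) (EReal.coe_le_coe_iff.2 hqz.le)

lemma measurable_sSup_image_support {Ω : Type*} {m : MeasurableSpace Ω} {ν : Ω → Measure E}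
    {φ : Ω → E → ℝ} (hφ : ∀ ω, LowerSemicontinuous (φ ω))
    (hν : ∀ q : ℚ, Measurable fun ω => ν ω {z | (q : ℝ) < φ ω z}) :
    Measurable fun ω => sSup ((fun z => (φ ω z : EReal)) '' (ν ω).support) := by
  simp_rw [sSup_image_support_eq_iSup_rat (hφ _)]
  exact .iSup fun q => .ite (hν q (measurableSet_singleton 0)) measurable_const measurable_const

end Support

open ProbabilityTheory

namespace CondLaw

variable {Ω E : Type*} {H mΩ : MeasurableSpace Ω} [MeasurableSpace E] {μ : Measure Ω}
  {X : Ω → E} {κ : Ω → Measure E}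

def toKernel (hκ : CondLaw H μ X κ) : @Kernel Ω E H _ :=
  @Kernel.mk Ω E H _ κ (@Measure.measurable_of_measurable_coe _ _ _ H κ hκ.meas)

instance (hκ : CondLaw H μ X κ) : @IsMarkovKernel Ω E H _ hκ.toKernel :=
  @IsMarkovKernel.mk Ω E H _ _ hκ.isProb

lemma measurable_measure_prodMk_left (hκ : CondLaw H μ X κ) {B : Set (Ω × E)}
    (hB : MeasurableSet[H.prod inferInstance] B) :
    Measurable[H] fun ω => κ ω (Prod.mk ω ⁻¹' B) :=
  Kernel.measurable_kernel_prodMk_left (mα := H) (κ := hκ.toKernel) hB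

lemma trim_compProd_eq_map [IsFiniteMeasure μ] (hκ : CondLaw H μ X κ) (hHF : H ≤ mΩ)
    (hX : Measurable X) :
    @Measure.compProd Ω E H _ (μ.trim hHF) hκ.toKernel =
      @Measure.map Ω (Ω × E) mΩ (H.prod inferInstance) (fun ω => (ω, X ω)) μ := by
  have hgraph : Measurable[mΩ, H.prod inferInstance] fun ω => (ω, X ω) :=
    (measurable_id'' hHF).prodMk hX
  refine @ext_of_generate_finite (Ω × E) (H.prod inferInstance) _ _
    (image2 (· ×ˢ ·) {s | MeasurableSet[H] s} {t | MeasurableSet t})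
    (@generateFrom_prod Ω E H _).symm (@isPiSystem_prod Ω E H _) _ ?_ ?_
  · rintro _ ⟨C, hC, A, hA, rfl⟩
    rw [Measure.compProd_apply_prod (mα := H) hC hA, Measure.map_apply hgraph (hC.prod hA)]
    change ∫⁻ ω in C, κ ω A ∂μ.trim hHF = _
    rw [setLIntegral_trim hHF (hκ.meas A hA) hC, mk_preimage_prod, preimage_id']
    exact hκ.law A hA C hC
  · rw [Measure.compProd_apply_univ (mα := H), Measure.map_apply hgraph MeasurableSet.univ,
      trim_measurableSet_eq hHF MeasurableSet.univ, preimage_univ]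

lemma ae_measure_prodMk_left_eq_zero [IsFiniteMeasure μ] (hκ : CondLaw H μ X κ)
    (hHF : H ≤ mΩ) (hX : Measurable X) {B : Set (Ω × E)}
    (hB : MeasurableSet[H.prod inferInstance] B) (h0 : μ ((fun ω => (ω, X ω)) ⁻¹' B) = 0) :
    ∀ᵐ ω ∂μ, κ ω (Prod.mk ω ⁻¹' B) = 0 := by
  have hgraph : Measurable[mΩ, H.prod inferInstance] fun ω => (ω, X ω) :=
    (measurable_id'' hHF).prodMk hX
  have hB0 : @Measure.compProd Ω E H _ (μ.trim hHF) hκ.toKernel B = 0 := by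
    rw [hκ.trim_compProd_eq_map hHF hX, Measure.map_apply hgraph hB, h0]
  rw [Measure.compProd_apply (mα := H) hB] at hB0
  exact ae_of_ae_trim hHF ((lintegral_eq_zero_iff (hκ.measurable_measure_prodMk_left hB)).1 hB0)

variable [TopologicalSpace E]

lemma ae_sSup_image_support_le [IsFiniteMeasure μ] (hκ : CondLaw H μ X κ) (hHF : H ≤ mΩ)
    (hX : Measurable X) {φ : Ω → E → ℝ}
    (hφm : Measurable[H.prod inferInstance] fun p : Ω × E => φ p.1 p.2)
    (hφ : ∀ ω, LowerSemicontinuous (φ ω)) {γ : Ω → EReal} (hγ : Measurable[H] γ)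
    (hle : ∀ᵐ ω ∂μ, (φ ω (X ω) : EReal) ≤ γ ω) :
    ∀ᵐ ω ∂μ, sSup ((fun z => (φ ω z : EReal)) '' (κ ω).support) ≤ γ ω := by
  have hB : MeasurableSet[H.prod inferInstance] {p : Ω × E | γ p.1 < φ p.1 p.2} :=
    measurableSet_lt (hγ.comp measurable_fst) (measurable_coe_real_ereal.comp hφm)
  have h0 : μ ((fun ω => (ω, X ω)) ⁻¹' {p : Ω × E | γ p.1 < φ p.1 p.2}) = 0 := by
    show μ {ω | γ ω < φ ω (X ω)} = 0
    simpa only [not_le] using ae_iff.1 hle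
  filter_upwards [hκ.ae_measure_prodMk_left_eq_zero hHF hX hB h0] with ω hω
  have hφE : LowerSemicontinuous fun z => (φ ω z : EReal) :=
    continuous_coe_real_ereal.comp_lowerSemicontinuous (hφ ω) EReal.coe_strictMono.monotone
  exact sSup_le (forall_mem_image.2 fun z hz => hφE.le_of_mem_support hω hz)

end CondLaw

theorem condEssSup_eq_fenchel_conjugate_general
    {Ω : Type*} (H : MeasurableSpace Ω) [mΩ : MeasurableSpace Ω] (μ : Measure Ω)
    [IsProbabilityMeasure μ] (hHF : H ≤ mΩ)
    {d : ℕ} (Y : Ω → Fin d → ℝ)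
    (hY : Measurable[mΩ] Y)
    (κ : Ω → Measure (Fin d → ℝ)) (hκ : CondLaw H μ Y κ)
    (hYsupp : ∀ ω, Y ω ∈ condSupp κ ω)
    (g : Ω → (Fin d → ℝ) → ℝ)
    (hgmeas : Measurable[H.prod inferInstance] fun p : Ω × (Fin d → ℝ) => g p.1 p.2)
    (hglsc : ∀ ω, LowerSemicontinuous (g ω))
    (θ : Ω → Fin d → ℝ) (hθ : Measurable[H] θ)
    (γ : Ω → EReal)
    (hγ : IsCondEssSup H μ (fun ω => g ω (Y ω) - dotp (θ ω) (Y ω)) γ) :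
    ∀ᵐ ω ∂μ,
      γ ω = sSup ((fun z => ((g ω z - dotp (θ ω) z : ℝ) : EReal)) '' condSupp κ ω) ∧
      γ ω = eConj (fObj g (condSupp κ) ω) (-(θ ω)) := by
  obtain ⟨hγm, hγle, hγmin⟩ := hγ
  have hsupp : ∀ ω, condSupp κ ω = (κ ω).support := fun ω =>
    have := hκ.isProb ω; condSupp_eq_support κ ω
  set φ : Ω → (Fin d → ℝ) → ℝ := fun ω z => g ω z - dotp (θ ω) z
  have hφm : Measurable[H.prod inferInstance] fun p : Ω × (Fin d → ℝ) => φ p.1 p.2 :=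
    hgmeas.sub ((hθ.comp measurable_fst).dotp measurable_snd)
  have hφ : ∀ ω, LowerSemicontinuous (φ ω) := fun ω =>
    (hglsc ω).add (continuous_dotp_right (θ ω)).neg.lowerSemicontinuous
  have hS_le : ∀ᵐ ω ∂μ, sSup ((fun z => (φ ω z : EReal)) '' (κ ω).support) ≤ γ ω :=
    hκ.ae_sSup_image_support_le hHF hY hφm hφ hγm hγle
  have hle_S : ∀ᵐ ω ∂μ, γ ω ≤ sSup ((fun z => (φ ω z : EReal)) '' (κ ω).support) :=
    hγmin _ (measurable_sSup_image_support hφ fun q =>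
        hκ.measurable_measure_prodMk_left (measurableSet_lt measurable_const hφm))
      (.of_forall fun ω => le_sSup (mem_image_of_mem _ (hsupp ω ▸ hYsupp ω)))
  filter_upwards [hS_le, hle_S] with ω hS_le hle_S
  rw [eConj_fObj_neg, hsupp]
  exact ⟨le_antisymm hle_S hS_le, le_antisymm hle_S hS_le⟩

/-- the one-step conditional essential supremum of `g(Y) - θ·Y` equals
the supremum over the conditional support of `Y`, which is the Fenchel–Legendre
conjugate `f^*(-θ)` of `f = -g + δ_{supp_H Y}`. -/
theorem condEssSup_eq_fenchel_conjugate
    {Ω : Type*} (H : MeasurableSpace Ω) [mΩ : MeasurableSpace Ω] (μ : Measure Ω)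
    [IsProbabilityMeasure μ] [μ.IsComplete] (hHF : H ≤ mΩ)
    (hHcomp : ∀ s : Set Ω, μ s = 0 → MeasurableSet[H] s)
    {d : ℕ} (y Y : Ω → Fin d → ℝ)
    (hy : Measurable[H] y) (hY : Measurable[mΩ] Y)
    (hy0 : ∀ ω i, 0 ≤ y ω i) (hY0 : ∀ ω i, 0 ≤ Y ω i)
    (κ : Ω → Measure (Fin d → ℝ)) (hκ : CondLaw H μ Y κ)
    (hYsupp : ∀ ω, Y ω ∈ condSupp κ ω)
    (g : Ω → (Fin d → ℝ) → ℝ)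
    (hgmeas : Measurable[H.prod inferInstance] fun p : Ω × (Fin d → ℝ) => g p.1 p.2)
    (hglsc : ∀ ω, LowerSemicontinuous (g ω))
    (θ : Ω → Fin d → ℝ) (hθ : Measurable[H] θ)
    (γ : Ω → EReal)
    (hγ : IsCondEssSup H μ (fun ω => g ω (Y ω) - dotp (θ ω) (Y ω)) γ) :
    ∀ᵐ ω ∂μ,
      γ ω = sSup ((fun z => ((g ω z - dotp (θ ω) z : ℝ) : EReal)) '' condSupp κ ω) ∧
      γ ω = eConj (fObj g (condSupp κ) ω) (-(θ ω)) :=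
  condEssSup_eq_fenchel_conjugate_general H (mΩ := mΩ) μ hHF Y hY κ hκ hYsupp g hgmeas hglsc θ hθ γ
    hγ
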